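/- For all k ≥ 1, k·T(2,2k;k) = (k+1)·T(2,2k;k+1). -/

import Mathlib

/-!
`T 2 n k` counts the `k`-element independent sets of the ladder `range 2 ×ˢ range n`. Splitting
according to the two cells of the last column, and identifying the two resulting corner counts by
the reflection that swaps the rows, gives `T(n+2, k+1) = T(n+1, k+1) + T(n+1, k) + T(n, k)`.
The closed form `T(n, k+1) = ∑ₛ 2^(s+1) C(k, s) C(n-k, s+1)` satisfies the same recurrence and
initial values. At `n = 2k` the summands of `k T(2k, k)` and `(k+1) T(2k, k+1)` then agree term by
term, by `(a+1) C(a, s) C(b+1, s+1) = (b+1) C(b, s) C(a+1, s+1)`.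
-/

/-- Two grid squares (given as (row, column) pairs) are adjacent if they agree in one
coordinate and differ by one in the other. -/
def Adj (p q : ℕ × ℕ) : Prop :=
  (p.1 = q.1 ∧ (p.2 + 1 = q.2 ∨ q.2 + 1 = p.2)) ∨
  (p.2 = q.2 ∧ (p.1 + 1 = q.1 ∨ q.1 + 1 = p.1))

instance : DecidableRel Adj := fun _ _ => by unfold Adj; infer_instance

/-- `T m n k` is the number of ways to select `k` squares from an `m × n` grid with
no two selected squares horizontally or vertically adjacent. -/
def T (m n k : ℕ) : ℕ :=
  (((Finset.range m ×ˢ Finset.range n).powersetCard k).filter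
    (fun s => ∀ p ∈ s, ∀ q ∈ s, ¬ Adj p q)).card

open Finset

section IndepSets

variable {α : Type*} (r : α → α → Prop)

def IsIndep (s : Finset α) : Prop := ∀ p ∈ s, ∀ q ∈ s, ¬ r p q

theorem IsIndep.notMem_of_rel {r} {s : Finset α} (hs : IsIndep r s) {c d : α} (hc : c ∈ s)
    (hcd : r c d) : d ∉ s :=
  fun hd => hs c hc d hd hcd

variable [DecidableRel r]

instance : DecidablePred (IsIndep r) := fun _ => by unfold IsIndep; infer_instance

def indepSets (S : Finset α) (k : ℕ) : Finset (Finset α) :=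
  {s ∈ S.powersetCard k | IsIndep r s}

variable {r}

theorem mem_indepSets {S s : Finset α} {k : ℕ} :
    s ∈ indepSets r S k ↔ s ⊆ S ∧ #s = k ∧ IsIndep r s := by
  simp [indepSets, and_assoc]

theorem indepSets_zero (S : Finset α) : indepSets r S 0 = {∅} := by
  simp [indepSets, IsIndep]

theorem indepSets_map (e : α ↪ α) {S : Finset α}
    (he : ∀ p ∈ S, ∀ q ∈ S, r (e p) (e q) ↔ r p q) (k : ℕ) :
    indepSets r (S.map e) k = (indepSets r S k).map (mapEmbedding e).toEmbedding := by
  rw [indepSets, indepSets, powersetCard_map, filter_map]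
  congr 1
  refine filter_congr fun s hs => ?_
  have hS := (mem_powersetCard.1 hs).1
  simp only [Function.comp_apply, RelEmbedding.coe_toEmbedding, mapEmbedding_apply, IsIndep,
    forall_mem_map]
  exact forall₂_congr fun p hp => forall₂_congr fun q hq => not_congr (he p (hS hp) q (hS hq))

variable [DecidableEq α]

theorem card_indepSets_eq_card_erase_add (S : Finset α) (c : α) (k : ℕ) :
    #(indepSets r S k) = #(indepSets r (S.erase c) k) + #{s ∈ indepSets r S k | c ∈ s} := by
  rw [← card_filter_add_card_filter_not (p := (c ∈ ·)), add_comm]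
  congr 2
  ext s
  simp only [mem_filter, mem_indepSets, subset_erase]
  tauto

theorem filter_mem_indepSets_erase_of_rel (S : Finset α) {c d : α} (hcd : r c d) (k : ℕ) :
    {s ∈ indepSets r (S.erase d) k | c ∈ s} = {s ∈ indepSets r S k | c ∈ s} := by
  ext s
  simp only [mem_filter, mem_indepSets, subset_erase]
  constructor
  · rintro ⟨⟨⟨hS, -⟩, hk, hs⟩, hc⟩
    exact ⟨⟨hS, hk, hs⟩, hc⟩
  · rintro ⟨⟨hS, hk, hs⟩, hc⟩
    exact ⟨⟨⟨hS, hs.notMem_of_rel hc hcd⟩, hk, hs⟩, hc⟩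

theorem card_filter_mem_indepSets_succ [Std.Symm r] {S : Finset α} {c : α} (hc : c ∈ S)
    (hcc : ¬ r c c) (k : ℕ) :
    #{s ∈ indepSets r S (k + 1) | c ∈ s} = #(indepSets r {q ∈ S.erase c | ¬ r c q} k) := by
  refine card_bij' (fun s _ => s.erase c) (fun t _ => insert c t) ?_ ?_ ?_ ?_
  · intro s hs
    simp only [mem_filter, mem_indepSets] at hs ⊢
    obtain ⟨⟨hS, hk, hs⟩, hcs⟩ := hs
    refine ⟨fun q hq => ?_, by rw [card_erase_of_mem hcs, hk]; rfl,
      fun p hp q hq => hs p (mem_of_mem_erase hp) q (mem_of_mem_erase hq)⟩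
    rw [mem_filter]
    exact ⟨erase_subset_erase c hS hq, fun h => hs.notMem_of_rel hcs h (mem_of_mem_erase hq)⟩
  · intro t ht
    simp only [mem_filter, mem_indepSets, subset_iff, mem_erase] at ht ⊢
    obtain ⟨hS, hk, ht⟩ := ht
    have hct : c ∉ t := fun h => (hS h).1.1 rfl
    refine ⟨⟨?_, by rw [card_insert_of_notMem hct, hk], ?_⟩, mem_insert_self c t⟩
    · intro q hq
      rcases mem_insert.1 hq with rfl | hq
      exacts [hc, (hS hq).1.2]
    · intro p hp q hq
      rcases mem_insert.1 hp with rfl | hpt <;> rcases mem_insert.1 hq with rfl | hqt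
      · exact hcc
      · exact (hS hqt).2
      · exact fun h => (hS hpt).2 (Std.Symm.symm _ _ h)
      · exact ht p hpt q hqt
  · intro s hs
    exact insert_erase (mem_filter.1 hs).2
  · intro t ht
    refine erase_insert fun h => ?_
    simpa using (mem_indepSets.1 ht).1 h

theorem card_filter_mem_indepSets_map (e : α ↪ α) {S : Finset α}
    (he : ∀ p ∈ S, ∀ q ∈ S, r (e p) (e q) ↔ r p q) (c : α) (k : ℕ) :
    #{s ∈ indepSets r (S.map e) k | e c ∈ s} = #{s ∈ indepSets r S k | c ∈ s} := by
  rw [indepSets_map e he, filter_map, card_map]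
  congr 2
  ext s
  simp

end IndepSets

theorem T_eq_card_indepSets (m n k : ℕ) : T m n k = #(indepSets Adj (range m ×ˢ range n) k) :=
  rfl

theorem T_zero_right (m n : ℕ) : T m n 0 = 1 := by
  rw [T_eq_card_indepSets, indepSets_zero, card_singleton]

instance : Std.Symm Adj := ⟨fun p q h => by unfold Adj at *; omega⟩

theorem not_adj_self (p : ℕ × ℕ) : ¬ Adj p p := by
  unfold Adj; omega

def ladder (n : ℕ) : Finset (ℕ × ℕ) := range 2 ×ˢ range n

theorem mem_ladder {p : ℕ × ℕ} {n : ℕ} : p ∈ ladder n ↔ p.1 < 2 ∧ p.2 < n := by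
  simp [ladder]

theorem card_le_of_isIndep_of_subset_ladder {s : Finset (ℕ × ℕ)} {n : ℕ} (hs : IsIndep Adj s)
    (hsub : s ⊆ ladder n) : #s ≤ n := by
  have hinj : Set.InjOn Prod.snd (s : Set (ℕ × ℕ)) := by
    rintro p hp q hq hpq
    have hp2 := (mem_ladder.1 (hsub hp)).1
    have hq2 := (mem_ladder.1 (hsub hq)).1
    by_contra hne
    exact hs p hp q hq (Or.inr ⟨hpq, by grind⟩)
  simpa using
    card_le_card_of_injOn Prod.snd (fun p hp => mem_range.2 (mem_ladder.1 (hsub hp)).2) hinj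

theorem T_two_eq_card_indepSets_ladder (n k : ℕ) : T 2 n k = #(indepSets Adj (ladder n) k) :=
  rfl

theorem T_two_eq_zero_of_lt {n k : ℕ} (h : n < k) : T 2 n k = 0 := by
  rw [T_two_eq_card_indepSets_ladder]
  refine card_eq_zero.2 (eq_empty_of_forall_notMem fun s hs => ?_)
  obtain ⟨hsub, rfl, hind⟩ := mem_indepSets.1 hs
  exact (card_le_of_isIndep_of_subset_ladder hind hsub).not_gt h

theorem T_two_one_one : T 2 1 1 = 2 := by decide

def rowSwap : ℕ × ℕ ≃ ℕ × ℕ := (Equiv.swap 0 1).prodCongr (Equiv.refl ℕ)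

theorem ladder_map_rowSwap (n : ℕ) : (ladder n).map rowSwap.toEmbedding = ladder n := by
  ext ⟨a, b⟩
  simp only [mem_map_equiv, mem_ladder, rowSwap, Equiv.prodCongr_symm, Equiv.symm_swap,
    Equiv.prodCongr_apply, Prod.map_apply, Equiv.swap_apply_def, Equiv.refl_symm,
    Equiv.coe_refl, id_eq]
  split_ifs <;> omega

theorem adj_rowSwap_iff {n : ℕ} {p q : ℕ × ℕ} (hp : p ∈ ladder n) (hq : q ∈ ladder n) :
    Adj (rowSwap p) (rowSwap q) ↔ Adj p q := by
  obtain ⟨a, b⟩ := p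
  obtain ⟨c, d⟩ := q
  obtain ⟨ha, -⟩ := mem_ladder.1 hp
  obtain ⟨hc, -⟩ := mem_ladder.1 hq
  interval_cases a <;> interval_cases c <;> simp [rowSwap, Adj]

def cornerCount (n k : ℕ) : ℕ := #{s ∈ indepSets Adj (ladder (n + 1)) k | (0, n) ∈ s}

def cutCount (n k : ℕ) : ℕ := #(indepSets Adj ((ladder (n + 1)).erase (0, n)) k)

theorem T_two_succ (n k : ℕ) : T 2 (n + 1) k = cutCount n k + cornerCount n k :=
  card_indepSets_eq_card_erase_add _ _ _

theorem cornerCount_eq_filter_mem_one (n k : ℕ) :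
    cornerCount n k = #{s ∈ indepSets Adj (ladder (n + 1)) k | (1, n) ∈ s} := by
  rw [cornerCount, ← card_filter_mem_indepSets_map rowSwap.toEmbedding
    (fun p hp q hq => adj_rowSwap_iff hp hq), ladder_map_rowSwap]
  rfl

theorem cutCount_eq (n k : ℕ) : cutCount n k = T 2 n k + cornerCount n k := by
  have hcut : ((ladder (n + 1)).erase (0, n)).erase (1, n) = ladder n := by
    ext ⟨a, b⟩
    simp only [mem_erase, ne_eq, Prod.mk.injEq, mem_ladder]
    omega
  rw [cutCount, card_indepSets_eq_card_erase_add _ (1, n), hcut,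
    filter_mem_indepSets_erase_of_rel _ (by simp [Adj] : Adj (1, n) (0, n)),
    cornerCount_eq_filter_mem_one]
  rfl

theorem cornerCount_succ_succ (n k : ℕ) : cornerCount (n + 1) (k + 1) = cutCount n k := by
  have hnbhd : {q ∈ (ladder (n + 2)).erase (0, n + 1) | ¬ Adj (0, n + 1) q}
      = (ladder (n + 1)).erase (0, n) := by
    ext ⟨a, b⟩
    simp only [Adj, not_or, not_and, mem_filter, mem_erase, ne_eq, Prod.mk.injEq, mem_ladder]
    omega
  rw [cornerCount, card_filter_mem_indepSets_succ (mem_ladder.2 (by simp)) (not_adj_self _),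
    hnbhd]
  rfl

theorem T_two_add_two_succ (n k : ℕ) :
    T 2 (n + 2) (k + 1) = T 2 (n + 1) (k + 1) + T 2 (n + 1) k + T 2 n k := by
  have : T 2 (n + 2) (k + 1) = cutCount (n + 1) (k + 1) + cornerCount (n + 1) (k + 1) :=
    T_two_succ (n + 1) (k + 1)
  have := cutCount_eq (n + 1) (k + 1)
  have := cornerCount_succ_succ n k
  have := cutCount_eq n k
  have := T_two_succ n k
  omega

def ladderSum (j d : ℕ) : ℕ :=
  ∑ s ∈ range (j + 1), 2 ^ (s + 1) * j.choose s * d.choose (s + 1)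

def delannoy (j d : ℕ) : ℕ := ∑ s ∈ range (j + 1), 2 ^ s * j.choose s * d.choose s

theorem ladderSum_zero_right (j : ℕ) : ladderSum j 0 = 0 := by
  simp [ladderSum]

theorem ladderSum_succ_right (j d : ℕ) :
    ladderSum j (d + 1) = ladderSum j d + 2 * delannoy j d := by
  rw [ladderSum, ladderSum, delannoy, mul_sum, ← sum_add_distrib]
  refine sum_congr rfl fun s _ => ?_
  rw [Nat.choose_succ_succ d s]
  ring

theorem delannoy_succ_left (j d : ℕ) : delannoy (j + 1) d = delannoy j d + ladderSum j d := by
  have hshift : delannoy j d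
      = ∑ s ∈ range (j + 1), 2 ^ (s + 1) * j.choose (s + 1) * d.choose (s + 1) + 1 := by
    rw [delannoy, sum_range_succ', sum_range_succ]
    simp only [pow_zero, Nat.choose_zero_right, mul_one, Nat.choose_succ_self, mul_zero, zero_mul,
      add_zero]
  rw [delannoy, sum_range_succ', hshift, ladderSum]
  simp only [Nat.choose_succ_succ, add_mul, mul_add, sum_add_distrib, pow_zero,
    Nat.choose_zero_right, mul_one]
  ring

theorem ladderSum_succ_succ (j d : ℕ) :
    ladderSum (j + 1) (d + 1) = ladderSum (j + 1) d + ladderSum j (d + 1) + ladderSum j d := by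
  have := ladderSum_succ_right (j + 1) d
  have := delannoy_succ_left j d
  have := ladderSum_succ_right j d
  omega

theorem ladderSum_eq_sum_range_of_le {j N : ℕ} (h : j + 1 ≤ N) (d : ℕ) :
    ladderSum j d = ∑ s ∈ range N, 2 ^ (s + 1) * j.choose s * d.choose (s + 1) := by
  refine sum_subset (range_subset_range.2 h) fun s _ hs => ?_
  rw [Nat.choose_eq_zero_of_lt (by simpa using hs), mul_zero, zero_mul]

theorem add_one_mul_choose_mul_choose_comm (a b s : ℕ) :
    (a + 1) * (a.choose s * (b + 1).choose (s + 1))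
      = (b + 1) * (b.choose s * (a + 1).choose (s + 1)) := by
  refine Nat.eq_of_mul_eq_mul_right s.succ_pos ?_
  calc (a + 1) * (a.choose s * (b + 1).choose (s + 1)) * (s + 1)
      = (a + 1) * a.choose s * ((b + 1).choose (s + 1) * (s + 1)) := by ring
    _ = (a + 1).choose (s + 1) * (s + 1) * ((b + 1) * b.choose s) := by
        rw [Nat.add_one_mul_choose_eq, Nat.add_one_mul_choose_eq]
    _ = (b + 1) * (b.choose s * (a + 1).choose (s + 1)) * (s + 1) := by ring

theorem add_one_mul_ladderSum_comm (a b : ℕ) :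
    (a + 1) * ladderSum a (b + 1) = (b + 1) * ladderSum b (a + 1) := by
  rw [ladderSum_eq_sum_range_of_le (N := a + b + 1) (by omega),
    ladderSum_eq_sum_range_of_le (N := a + b + 1) (by omega), mul_sum, mul_sum]
  refine sum_congr rfl fun s _ => ?_
  linear_combination 2 ^ (s + 1) * add_one_mul_choose_mul_choose_comm a b s

-- An independent set of size `k+1` whose occupied columns form `s+1` maximal runs: `C(k, s)` run
-- lengths, `C(n-k, s+1)` placements of the runs, and the row of the first cell of each run.
def ladderFormula : ℕ → ℕ → ℕ
  | _, 0 => 1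
  | n, k + 1 => ladderSum k (n - k)

theorem ladderFormula_eq_zero_of_lt {n k : ℕ} (h : n < k) : ladderFormula n k = 0 := by
  obtain ⟨k, rfl⟩ := Nat.exists_eq_add_one_of_ne_zero (Nat.ne_zero_of_lt h)
  rw [ladderFormula, Nat.sub_eq_zero_of_le (by omega), ladderSum_zero_right]

theorem ladderFormula_add_two_succ (n k : ℕ) :
    ladderFormula (n + 2) (k + 1)
      = ladderFormula (n + 1) (k + 1) + ladderFormula (n + 1) k + ladderFormula n k := by
  rcases k with _ | j
  · simp only [ladderFormula, ladderSum, zero_add, range_one, tsub_zero, sum_singleton, pow_one,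
      Nat.choose_self, mul_one, Nat.choose_one_right]
    ring
  rcases lt_or_ge n j with h | h
  · rw [ladderFormula_eq_zero_of_lt (by omega : n + 2 < j + 2),
      ladderFormula_eq_zero_of_lt (by omega : n + 1 < j + 2),
      ladderFormula_eq_zero_of_lt (by omega : n + 1 < j + 1),
      ladderFormula_eq_zero_of_lt (by omega : n < j + 1)]
  obtain ⟨d, rfl⟩ := Nat.exists_eq_add_of_le h
  simp only [ladderFormula]
  rw [show j + d + 2 - (j + 1) = d + 1 by omega, show j + d + 1 - (j + 1) = d by omega,
    show j + d + 1 - j = d + 1 by omega, show j + d - j = d by omega, ladderSum_succ_succ]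

theorem T_two_eq_ladderFormula : ∀ n k, T 2 n k = ladderFormula n k
  | _, 0 => T_zero_right 2 _
  | 0, k + 1 => by
    rw [T_two_eq_zero_of_lt k.succ_pos, ladderFormula_eq_zero_of_lt k.succ_pos]
  | 1, 1 => T_two_one_one
  | 1, k + 2 => by
    rw [T_two_eq_zero_of_lt (by omega), ladderFormula_eq_zero_of_lt (by omega)]
  | n + 2, k + 1 => by
    rw [T_two_add_two_succ, ladderFormula_add_two_succ, T_two_eq_ladderFormula (n + 1) (k + 1),
      T_two_eq_ladderFormula (n + 1) k, T_two_eq_ladderFormula n k]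

theorem T2_max_ratio_general (k : ℕ) :
    k * T 2 (2 * k) k = (k + 1) * T 2 (2 * k) (k + 1) := by
  rcases k with _ | m
  · simpa using (T_two_eq_zero_of_lt zero_lt_one).symm
  rw [T_two_eq_ladderFormula, T_two_eq_ladderFormula, ladderFormula, ladderFormula,
    show 2 * (m + 1) - m = m + 1 + 1 by omega, show 2 * (m + 1) - (m + 1) = m + 1 by omega]
  exact add_one_mul_ladderSum_comm m (m + 1)

theorem T2_max_ratio (k : ℕ) (hk : 1 ≤ k) :
    k * T 2 (2 * k) k = (k + 1) * T 2 (2 * k) (k + 1) :=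
  T2_max_ratio_general k
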